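/- arXiv:1912.12873 — 2 statements merged into one kernel-verified Lean document; each statement's English description precedes it below -/
import Mathlib

section
/- Let G be a finite perfect-information game with n players (finite game tree, no chance moves) satisfying the no-indifference condition: whenever two leaves give the same payoff to some player, they give the same payoff to every player. If f is a behavioral mixed-strategy subgame-perfect equilibrium, then every pure strategy profile g selecting at each node an action in the support of f at that node is a pure-strategy subgame-perfect equilibrium. -/
set_option linter.unusedVariables false

/-- A finite game tree with `n` players: each internal node is controlled by a
player in `Fin n` and has `k+1` children; leaves carry a payoff vector. -/
inductive GameTree (n : ℕ) : Type
  | leaf (u : Fin n → ℝ) : GameTree n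
  | node (p : Fin n) (k : ℕ) (c : Fin (k + 1) → GameTree n) : GameTree n

/-- A pure strategy profile: a choice of child at every internal node. -/
inductive PureProfile {n : ℕ} : GameTree n → Type
  | leaf {u : Fin n → ℝ} : PureProfile (.leaf u)
  | node {p : Fin n} {k : ℕ} {c : Fin (k + 1) → GameTree n}
      (ch : Fin (k + 1)) (sub : ∀ j, PureProfile (c j)) :
      PureProfile (.node p k c)

/-- The payoff vector induced by a pure strategy profile. -/
def payoff {n : ℕ} : {t : GameTree n} → PureProfile t → Fin n → ℝ
  | .leaf u, .leaf, i => u i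
  | .node _ _ _, .node ch sub, i => payoff (sub ch) i

/-- `Dev i g g'` : `g'` is a unilateral deviation of `g` by player `i`
(they agree at every node not controlled by `i`). -/
def Dev {n : ℕ} (i : Fin n) : {t : GameTree n} → PureProfile t → PureProfile t → Prop
  | .leaf _, _, _ => True
  | .node p _ _, .node ch sub, .node ch' sub' =>
      (p ≠ i → ch' = ch) ∧ ∀ j, Dev i (sub j) (sub' j)

/-- Subgame-perfect equilibrium for pure profiles: at every node, no player can
strictly improve her payoff in the subgame rooted there by a unilateral deviation. -/
def IsSPE {n : ℕ} : {t : GameTree n} → PureProfile t → Prop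
  | .leaf _, _ => True
  | .node p k c, .node ch sub =>
      (∀ j, IsSPE (sub j)) ∧
      ∀ (i : Fin n) (g' : PureProfile (.node p k c)),
        Dev i (.node ch sub) g' →
        payoff g' i ≤ payoff (PureProfile.node (p := p) ch sub) i

/-- A behavioral mixed strategy profile: a probability distribution over
children at every internal node. -/
inductive MixedProfile {n : ℕ} : GameTree n → Type
  | leaf {u : Fin n → ℝ} : MixedProfile (.leaf u)
  | node {p : Fin n} {k : ℕ} {c : Fin (k + 1) → GameTree n}
      (w : Fin (k + 1) → ℝ) (hw : ∀ j, 0 ≤ w j) (hsum : ∑ j, w j = 1)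
      (sub : ∀ j, MixedProfile (c j)) :
      MixedProfile (.node p k c)

/-- Expected payoff vector of a behavioral mixed strategy profile. -/
noncomputable def mpayoff {n : ℕ} : {t : GameTree n} → MixedProfile t → Fin n → ℝ
  | .leaf u, .leaf, i => u i
  | .node _ _ _, .node w _ _ sub, i => ∑ j, w j * mpayoff (sub j) i

/-- `MDev i f f'` : `f'` is a unilateral deviation of the mixed profile `f` by player `i`. -/
def MDev {n : ℕ} (i : Fin n) : {t : GameTree n} → MixedProfile t → MixedProfile t → Prop
  | .leaf _, _, _ => True
  | .node p _ _, .node w _ _ sub, .node w' _ _ sub' =>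
      (p ≠ i → w' = w) ∧ ∀ j, MDev i (sub j) (sub' j)

/-- Subgame-perfect equilibrium for behavioral mixed profiles. -/
noncomputable def MixedSPE {n : ℕ} : {t : GameTree n} → MixedProfile t → Prop
  | .leaf _, _ => True
  | .node p k c, .node w hw hs sub =>
      (∀ j, MixedSPE (sub j)) ∧
      ∀ (i : Fin n) (f' : MixedProfile (.node p k c)),
        MDev i (MixedProfile.node (p := p) w hw hs sub) f' →
        mpayoff f' i ≤ mpayoff (MixedProfile.node (p := p) w hw hs sub) i

/-- `InSupport f g` : at every internal node, the pure profile `g` selects an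
action lying in the support of the mixed action of `f` at that node. -/
def InSupport {n : ℕ} : {t : GameTree n} → MixedProfile t → PureProfile t → Prop
  | .leaf _, _, _ => True
  | .node _ _ _, .node w _ _ msub, .node ch psub =>
      0 < w ch ∧ ∀ j, InSupport (msub j) (psub j)

/-- The payoffs of leaves of the game tree. -/
def IsLeafPayoff {n : ℕ} : GameTree n → (Fin n → ℝ) → Prop
  | .leaf u, v => u = v
  | .node _ _ c, v => ∃ j, IsLeafPayoff (c j) v

/-- No-indifference condition: if two leaves give the same payoff to some
player, they give the same payoff to every player. -/
def NoIndifference {n : ℕ} (t : GameTree n) : Prop :=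
  ∀ u v, IsLeafPayoff t u → IsLeafPayoff t v → (∃ i, u i = v i) → u = v


/-!
Fix a mixed subgame-perfect equilibrium `f`. At a node of player `p`, deviating to a pure
action shows that every child is worth at most the node to `p`; since the node's value is the
`f`-weighted average of its children's, every child in the support of `f` is worth exactly the
node's value to `p`. By induction, a pure profile `g` in the support of `f` realises the payoff
vector of `f` in every subgame, which is the payoff of some leaf. Two children in the support
thus carry leaf payoffs on which `p` agrees, so by no-indifference they carry the same payoff
vector. Hence following `g` is worth `f`'s value to every player, and a player deviating from
`g` at her own node obtains at most her value under `f` at some child, which is at most the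
value of the node.
-/

theorem eq_sum_mul_of_forall_le_sum_mul {ι : Type*} [Fintype ι] {w x : ι → ℝ}
    (hw : ∀ j, 0 ≤ w j) (hs : ∑ j, w j = 1) (hle : ∀ j, x j ≤ ∑ j, w j * x j)
    {j : ι} (hj : 0 < w j) : x j = ∑ j, w j * x j := by
  set S := ∑ j, w j * x j
  have hzero : ∑ j, w j * (S - x j) = 0 := by
    simp only [mul_sub, Finset.sum_sub_distrib, ← Finset.sum_mul, hs, one_mul, S, sub_self]
  have hterm := (Finset.sum_eq_zero_iff_of_nonneg fun j _ =>
    mul_nonneg (hw j) (sub_nonneg.mpr (hle j))).mp hzero j (Finset.mem_univ j)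
  rcases mul_eq_zero.mp hterm with h | h
  · exact absurd h hj.ne'
  · linarith

theorem sum_mul_eq_of_forall_pos {ι : Type*} [Fintype ι] {w x : ι → ℝ} {a : ℝ}
    (hw : ∀ j, 0 ≤ w j) (hs : ∑ j, w j = 1) (hx : ∀ j, 0 < w j → x j = a) :
    ∑ j, w j * x j = a := by
  calc ∑ j, w j * x j = ∑ j, w j * a := by
        refine Finset.sum_congr rfl fun j _ => ?_
        rcases (hw j).eq_or_lt with h | h
        · rw [← h, zero_mul, zero_mul]
        · rw [hx j h]
    _ = a := by rw [← Finset.sum_mul, hs, one_mul]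

theorem MDev.refl {n : ℕ} (i : Fin n) : {t : GameTree n} → (f : MixedProfile t) → MDev i f f
  | .leaf _, .leaf => trivial
  | .node _ _ _, .node _ _ _ sub => ⟨fun _ => rfl, fun j => MDev.refl i (sub j)⟩

theorem isLeafPayoff_payoff {n : ℕ} : {t : GameTree n} → (g : PureProfile t) →
    IsLeafPayoff t (payoff g)
  | .leaf _, .leaf => rfl
  | .node _ _ _, .node ch sub => ⟨ch, isLeafPayoff_payoff (sub ch)⟩

theorem NoIndifference.child {n : ℕ} {p : Fin n} {k : ℕ} {c : Fin (k + 1) → GameTree n}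
    (h : NoIndifference (.node p k c)) (j : Fin (k + 1)) : NoIndifference (c j) :=
  fun u v hu hv huv => h u v ⟨j, hu⟩ ⟨j, hv⟩ huv

section MixedSPE

variable {n : ℕ} {p : Fin n} {k : ℕ} {c : Fin (k + 1) → GameTree n}
  {w : Fin (k + 1) → ℝ} {hw : ∀ j, 0 ≤ w j} {hs : ∑ j, w j = 1}
  {msub : ∀ j, MixedProfile (c j)}

theorem MixedSPE.mpayoff_child_le (hf : MixedSPE (MixedProfile.node (p := p) w hw hs msub))
    (j : Fin (k + 1)) :
    mpayoff (msub j) p ≤ mpayoff (MixedProfile.node (p := p) w hw hs msub) p := by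
  let dirac : Fin (k + 1) → ℝ := fun j' => if j' = j then 1 else 0
  have hdirac := hf.2 p (MixedProfile.node (p := p) dirac
      (fun j' => by dsimp only [dirac]; split <;> norm_num) (by simp [dirac]) msub)
    (by exact ⟨fun hpp => absurd rfl hpp, fun j' => MDev.refl p (msub j')⟩)
  simpa [mpayoff, dirac] using hdirac

theorem MixedSPE.mpayoff_child_eq (hf : MixedSPE (MixedProfile.node (p := p) w hw hs msub))
    {j : Fin (k + 1)} (hj : 0 < w j) :
    mpayoff (msub j) p = mpayoff (MixedProfile.node (p := p) w hw hs msub) p :=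
  eq_sum_mul_of_forall_le_sum_mul (x := fun j => mpayoff (msub j) p) hw hs
    hf.mpayoff_child_le hj

end MixedSPE

theorem payoff_eq_mpayoff {n : ℕ} : {t : GameTree n} → NoIndifference t →
    (f : MixedProfile t) → MixedSPE f → (g : PureProfile t) → InSupport f g →
    payoff g = mpayoff f
  | .leaf _, _, .leaf, _, .leaf, _ => rfl
  | .node p _ _, hni, .node w hw hs msub, hf, .node ch psub, hg => by
    obtain ⟨hch, hsup⟩ := hg
    have ih j : payoff (psub j) = mpayoff (msub j) :=
      payoff_eq_mpayoff (hni.child j) (msub j) (hf.1 j) (psub j) (hsup j)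
    have hsupport j (hj : 0 < w j) : mpayoff (msub j) = mpayoff (msub ch) := by
      rw [← ih j, ← ih ch]
      refine hni _ _ ⟨j, isLeafPayoff_payoff _⟩ ⟨ch, isLeafPayoff_payoff _⟩ ⟨p, ?_⟩
      rw [ih j, ih ch, hf.mpayoff_child_eq hj, hf.mpayoff_child_eq hch]
    funext i
    exact (congrFun (ih ch) i).trans
      (sum_mul_eq_of_forall_pos hw hs fun j hj => congrFun (hsupport j hj) i).symm

theorem payoff_le_of_dev {n : ℕ} {i : Fin n} : {t : GameTree n} → NoIndifference t →
    (f : MixedProfile t) → MixedSPE f → (g g' : PureProfile t) → InSupport f g →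
    Dev i g g' → payoff g' i ≤ payoff g i
  | .leaf _, _, _, _, .leaf, .leaf, _, _ => le_rfl
  | .node p _ _, hni, .node w hw hs msub, hf, .node ch psub, .node ch' psub', hg, hdev => by
    obtain ⟨hch', hdev'⟩ := hdev
    have ih : payoff (psub' ch') i ≤ payoff (psub ch') i :=
      payoff_le_of_dev (hni.child ch') (msub ch') (hf.1 ch') (psub ch') (psub' ch') (hg.2 ch')
        (hdev' ch')
    by_cases hpi : p = i
    · subst hpi
      calc payoff (psub' ch') p ≤ payoff (psub ch') p := ih
        _ = mpayoff (msub ch') p :=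
          congrFun (payoff_eq_mpayoff (hni.child ch') (msub ch') (hf.1 ch') (psub ch') (hg.2 ch')) p
        _ ≤ mpayoff (MixedProfile.node (p := p) w hw hs msub) p := hf.mpayoff_child_le ch'
        _ = payoff (PureProfile.node (p := p) ch psub) p :=
          (congrFun (payoff_eq_mpayoff hni _ hf _ hg) p).symm
    · obtain rfl := hch' hpi
      exact ih

theorem stmt3 {n : ℕ} (t : GameTree n) (hni : NoIndifference t)
    (f : MixedProfile t) (hf : MixedSPE f)
    (g : PureProfile t) (hg : InSupport f g) :
    IsSPE g := by
  induction t with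
  | leaf u => cases g; trivial
  | node p k c ih =>
    rcases f with _ | ⟨w, hw, hs, msub⟩
    rcases g with _ | ⟨ch, psub⟩
    exact ⟨fun j => ih j (hni.child j) (msub j) (hf.1 j) (psub j) (hg.2 j),
      fun i g' hdev => payoff_le_of_dev hni _ hf _ g' hg hdev⟩
end

section
/- In a finite perfect-information game (finitely many players, finite game tree), a pure strategy profile g is a subgame-perfect equilibrium if and only if it admits no profitable one-stage deviation: for every internal node h controlled by player i and every alternative child a of h, player i's payoff from following g starting at h is at least her payoff from choosing a at h and then following g. -/
set_option linter.unusedVariables false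

/-- One-stage-deviation property of a pure profile: at every internal node,
the mover's payoff from her prescribed choice is at least her payoff from
choosing any other child and then following the profile. -/
def OneStage {n : ℕ} : {t : GameTree n} → PureProfile t → Prop
  | .leaf _, _ => True
  | .node p _ _, .node ch sub =>
      (∀ a, payoff (sub a) p ≤ payoff (sub ch) p) ∧ ∀ j, OneStage (sub j)

/-! By induction on the tree, a deviation that changes the profile at many nodes is no better
for the deviator than following the profile below the root: in each subtree the deviation
does not pay (induction hypothesis), and at the root the one-stage condition says the prescribed
child is the mover's best reply against continuation play. -/

theorem Dev.refl {n : ℕ} (i : Fin n) : ∀ {t : GameTree n} (g : PureProfile t), Dev i g g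
  | .leaf _, .leaf => trivial
  | .node _ _ _, .node _ sub => ⟨fun _ => rfl, fun j => Dev.refl i (sub j)⟩

theorem OneStage.payoff_dev_le {n : ℕ} (i : Fin n) :
    ∀ {t : GameTree n} {g g' : PureProfile t}, OneStage g → Dev i g g' →
      payoff g' i ≤ payoff g i
  | .leaf _, .leaf, .leaf, _, _ => le_rfl
  | .node p _ _, .node ch sub, .node ch' sub', hg, hdev => by
    obtain ⟨hbest, hsub⟩ := hg
    obtain ⟨hfixed, hdev⟩ := hdev
    have ih : ∀ j, payoff (sub' j) i ≤ payoff (sub j) i :=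
      fun j => (hsub j).payoff_dev_le i (hdev j)
    show payoff (sub' ch') i ≤ payoff (sub ch) i
    by_cases hp : p = i
    · subst hp
      exact (ih ch').trans (hbest ch')
    · rw [hfixed hp]
      exact ih ch

theorem IsSPE.oneStage {n : ℕ} : ∀ {t : GameTree n} {g : PureProfile t}, IsSPE g → OneStage g
  | .leaf _, .leaf, _ => trivial
  | .node p _ _, .node _ sub, hg =>
    ⟨fun a => hg.2 p (.node a sub) ⟨fun hp => absurd rfl hp, fun j => Dev.refl p (sub j)⟩,
      fun j => (hg.1 j).oneStage⟩

theorem OneStage.isSPE {n : ℕ} : ∀ {t : GameTree n} {g : PureProfile t}, OneStage g → IsSPE g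
  | .leaf _, .leaf, _ => trivial
  | .node _ _ _, .node _ _, hg =>
    ⟨fun j => (hg.2 j).isSPE, fun i _ hdev => hg.payoff_dev_le i hdev⟩

theorem stmt8 {n : ℕ} (t : GameTree n) (g : PureProfile t) :
    IsSPE g ↔ OneStage g :=
  ⟨IsSPE.oneStage, OneStage.isSPE⟩
end
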